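/- Let (v_n)_{n∈ℤ} be a real sequence, E ∈ ℝ, and N > 0. Define K(N) = sup_{|n| ≤ N, |m| ≤ N} ‖T_{[m,n],E}‖. Then for every δ ∈ ℂ and every integer n with |n| ≤ N, the transfer matrix at the complex energy E + δ satisfies ‖T_{n,E+δ}‖ ≤ K(N) exp(K(N) |n| |δ|). -/
import Mathlib


noncomputable section

/-- The one-step transfer matrix `Π_{n,z} = [[z - v_n, -1], [1, 0]]` at the (possibly
complex) energy `z`. -/
def stepMat (v : ℤ → ℝ) (z : ℂ) (n : ℤ) : Matrix (Fin 2) (Fin 2) ℂ :=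
  !![z - (v n : ℂ), -1; 1, 0]

/-- `T_{n,z} = Π_{n,z} ⋯ Π_{1,z}` for `n ≥ 0` (with `T_{0,z} = 1`). -/
def transferPos (v : ℤ → ℝ) (z : ℂ) : ℕ → Matrix (Fin 2) (Fin 2) ℂ
  | 0 => 1
  | n + 1 => stepMat v z ((n : ℤ) + 1) * transferPos v z n

/-- `T_{-n,z} = Π_{-n+1,z}⁻¹ ⋯ Π_{-1,z}⁻¹ Π_{0,z}⁻¹` for `n ≥ 0`. -/
def transferNeg (v : ℤ → ℝ) (z : ℂ) : ℕ → Matrix (Fin 2) (Fin 2) ℂ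
  | 0 => 1
  | n + 1 => (stepMat v z (-(n : ℤ)))⁻¹ * transferNeg v z n

/-- The two-sided transfer matrix `T_{N,z}`, `N ∈ ℤ`. -/
def transferZ (v : ℤ → ℝ) (z : ℂ) (N : ℤ) : Matrix (Fin 2) (Fin 2) ℂ :=
  if 0 ≤ N then transferPos v z N.toNat else transferNeg v z (-N).toNat

/-- The transfer matrix `T_{[N₁,N₂],z} = T_{N₂,z} T_{N₁-1,z}⁻¹` from `N₁` to `N₂`. -/
def transferBox (v : ℤ → ℝ) (z : ℂ) (N₁ N₂ : ℤ) : Matrix (Fin 2) (Fin 2) ℂ :=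
  transferZ v z N₂ * (transferZ v z (N₁ - 1))⁻¹

/-- The operator norm (on the Euclidean space `ℂ²`) of a `2 × 2` complex matrix. -/
def opNorm (A : Matrix (Fin 2) (Fin 2) ℂ) : ℝ :=
  ‖LinearMap.toContinuousLinearMap (Matrix.toEuclideanLin A)‖

/-- `K(N) = sup_{|m| ≤ N, |n| ≤ N} ‖T_{[m,n],E}‖`. -/
def Ksup (v : ℤ → ℝ) (E : ℝ) (N : ℝ) : ℝ :=
  sSup {x : ℝ | ∃ m n : ℤ, (|m| : ℝ) ≤ N ∧ (|n| : ℝ) ≤ N ∧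
    x = opNorm (transferBox v (E : ℂ) m n)}

/-! ### Auxiliary material for the proof -/

open Matrix Finset
open scoped Matrix.Norms.L2Operator

namespace TransferAux

abbrev Mat2 := Matrix (Fin 2) (Fin 2) ℂ

lemma opNorm_eq_norm (A : Mat2) : opNorm A = ‖A‖ := rfl

/-- The perturbation matrix for positive steps. -/
def Pmat : Mat2 := !![1, 0; 0, 0]

/-- The perturbation matrix for negative steps. -/
def Qmat : Mat2 := !![0, 0; 0, 1]

lemma norm_Pmat_le : ‖Pmat‖ ≤ 1 := by
  have h := Matrix.l2_opNorm_conjTranspose_mul_self Pmat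
  have h2 : Pmatᴴ * Pmat = Pmat := by
    ext i j; fin_cases i <;> fin_cases j <;>
      simp [Pmat, Matrix.mul_apply, Fin.sum_univ_two, Matrix.conjTranspose_apply]
  rw [h2] at h
  nlinarith [norm_nonneg Pmat, sq_nonneg (‖Pmat‖ - 1)]

lemma norm_Qmat_le : ‖Qmat‖ ≤ 1 := by
  have h := Matrix.l2_opNorm_conjTranspose_mul_self Qmat
  have h2 : Qmatᴴ * Qmat = Qmat := by
    ext i j; fin_cases i <;> fin_cases j <;>
      simp [Qmat, Matrix.mul_apply, Fin.sum_univ_two, Matrix.conjTranspose_apply]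
  rw [h2] at h
  nlinarith [norm_nonneg Qmat, sq_nonneg (‖Qmat‖ - 1)]

lemma det_stepMat (v : ℤ → ℝ) (z : ℂ) (n : ℤ) : (stepMat v z n).det = 1 := by
  simp [stepMat, Matrix.det_fin_two_of]

lemma isUnit_det_stepMat (v : ℤ → ℝ) (z : ℂ) (n : ℤ) : IsUnit (stepMat v z n).det := by
  rw [det_stepMat]; exact isUnit_one

lemma stepMat_inv (v : ℤ → ℝ) (z : ℂ) (n : ℤ) :
    (stepMat v z n)⁻¹ = !![0, 1; -1, z - (v n : ℂ)] := by
  apply Matrix.inv_eq_right_inv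
  ext i j
  fin_cases i <;> fin_cases j <;>
    simp [stepMat, Matrix.mul_apply, Fin.sum_univ_two]

lemma stepMat_perturb (v : ℤ → ℝ) (E : ℝ) (δ : ℂ) (n : ℤ) :
    stepMat v ((E : ℂ) + δ) n = stepMat v (E : ℂ) n + δ • Pmat := by
  ext i j
  fin_cases i <;> fin_cases j <;>
    simp [stepMat, Pmat] <;> ring

lemma stepMat_inv_perturb (v : ℤ → ℝ) (E : ℝ) (δ : ℂ) (n : ℤ) :
    (stepMat v ((E : ℂ) + δ) n)⁻¹ = (stepMat v (E : ℂ) n)⁻¹ + δ • Qmat := by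
  rw [stepMat_inv, stepMat_inv]
  ext i j
  fin_cases i <;> fin_cases j <;>
    simp [Qmat] <;> ring

lemma det_transferPos (v : ℤ → ℝ) (z : ℂ) (k : ℕ) : (transferPos v z k).det = 1 := by
  induction k with
  | zero => simp [transferPos]
  | succ k ih => rw [transferPos, Matrix.det_mul, ih, det_stepMat, one_mul]

lemma det_transferNeg (v : ℤ → ℝ) (z : ℂ) (k : ℕ) : (transferNeg v z k).det = 1 := by
  induction k with
  | zero => simp [transferNeg]
  | succ k ih =>
    rw [transferNeg, Matrix.det_mul, ih, Matrix.det_nonsing_inv, det_stepMat]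
    simp

/-! ### Abstract expansion machinery -/

/-- The perturbed product sequence. -/
def seqS (M : ℕ → Mat2) (P : Mat2) (δ : ℂ) : ℕ → Mat2
  | 0 => 1
  | k + 1 => (M k + δ • P) * seqS M P δ k

/-- Partial products of the unperturbed factors, from index `j` to `k`. -/
def boxG (M : ℕ → Mat2) (j : ℕ) : ℕ → Mat2
  | 0 => 1
  | k + 1 => if j ≤ k then M k * boxG M j k else 1

lemma boxG_self (M : ℕ → Mat2) (j : ℕ) : boxG M j j = 1 := by
  cases j with
  | zero => rfl
  | succ j' => simp [boxG]

lemma boxG_succ_of_le (M : ℕ → Mat2) {j k : ℕ} (h : j ≤ k) :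
    boxG M j (k + 1) = M k * boxG M j k := by simp [boxG, h]

lemma seqS_expand (M : ℕ → Mat2) (P : Mat2) (δ : ℂ) (k : ℕ) :
    seqS M P δ k = boxG M 0 k +
      δ • ∑ j ∈ Finset.range k, boxG M (j + 1) k * (P * seqS M P δ j) := by
  induction k with
  | zero => simp [seqS, boxG]
  | succ k ih =>
    have h0 : boxG M 0 (k + 1) = M k * boxG M 0 k := boxG_succ_of_le M (Nat.zero_le k)
    have step1 : seqS M P δ (k + 1) = M k * seqS M P δ k + δ • (P * seqS M P δ k) := by
      show (M k + δ • P) * seqS M P δ k = _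
      rw [add_mul, Matrix.smul_mul]
    rw [step1]
    nth_rewrite 1 [ih]
    rw [Matrix.mul_add, Matrix.mul_smul, Finset.mul_sum, h0, Finset.sum_range_succ, smul_add,
      boxG_self, one_mul, ← add_assoc]
    congr 2
    congr 1
    apply Finset.sum_congr rfl
    intro j hj
    rw [boxG_succ_of_le M (Nat.succ_le_of_lt (Finset.mem_range.mp hj)), Matrix.mul_assoc]

lemma seqS_norm_le (M : ℕ → Mat2) (P : Mat2) (δ : ℂ) (K : ℝ) (hK : 1 ≤ K)
    (hP : ‖P‖ ≤ 1) (n : ℕ) (hbox : ∀ j k, j ≤ k → k ≤ n → ‖boxG M j k‖ ≤ K) :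
    ∀ k, k ≤ n → ‖seqS M P δ k‖ ≤ K * (1 + K * ‖δ‖) ^ k := by
  intro k
  induction k using Nat.strong_induction_on with
  | _ k ih =>
    intro hk
    set x : ℝ := K * ‖δ‖ with hx
    have hx0 : 0 ≤ x := mul_nonneg (le_trans zero_le_one hK) (norm_nonneg _)
    have hK0 : 0 ≤ K := le_trans zero_le_one hK
    rw [seqS_expand]
    have hsum : ‖∑ j ∈ Finset.range k, boxG M (j + 1) k * (P * seqS M P δ j)‖
        ≤ ∑ j ∈ Finset.range k, K * (K * (1 + x) ^ j) := by
      refine le_trans (norm_sum_le _ _) (Finset.sum_le_sum ?_)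
      intro j hj
      have hjk : j < k := Finset.mem_range.mp hj
      have h1 : ‖boxG M (j + 1) k‖ ≤ K := hbox (j + 1) k hjk hk
      have h2 : ‖seqS M P δ j‖ ≤ K * (1 + x) ^ j := ih j hjk (le_trans hjk.le hk)
      have hstep : ‖P * seqS M P δ j‖ ≤ 1 * (K * (1 + x) ^ j) :=
        le_trans (norm_mul_le _ _) (mul_le_mul hP h2 (norm_nonneg _) zero_le_one)
      calc ‖boxG M (j + 1) k * (P * seqS M P δ j)‖
          ≤ ‖boxG M (j + 1) k‖ * ‖P * seqS M P δ j‖ := norm_mul_le _ _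
        _ ≤ K * (1 * (K * (1 + x) ^ j)) :=
            mul_le_mul h1 hstep (norm_nonneg _) hK0
        _ = K * (K * (1 + x) ^ j) := by ring
    have hgeom : (∑ j ∈ Finset.range k, (1 + x) ^ j) * x = (1 + x) ^ k - 1 := by
      have := geom_sum_mul (1 + x) k
      simpa using this
    calc ‖boxG M 0 k + δ • ∑ j ∈ Finset.range k, boxG M (j + 1) k * (P * seqS M P δ j)‖
        ≤ ‖boxG M 0 k‖ + ‖δ‖ * ‖∑ j ∈ Finset.range k, boxG M (j + 1) k * (P * seqS M P δ j)‖ := by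
          refine le_trans (norm_add_le _ _) ?_
          rw [norm_smul]
      _ ≤ K + ‖δ‖ * ∑ j ∈ Finset.range k, K * (K * (1 + x) ^ j) :=
          add_le_add (hbox 0 k (Nat.zero_le k) hk)
            (mul_le_mul_of_nonneg_left hsum (norm_nonneg δ))
      _ = K + K * ((∑ j ∈ Finset.range k, (1 + x) ^ j) * x) := by
          rw [← Finset.mul_sum, ← Finset.mul_sum, hx]; ring
      _ = K + K * ((1 + x) ^ k - 1) := by rw [hgeom]
      _ = K * (1 + x) ^ k := by ring

/-! ### Instantiations -/

variable (v : ℤ → ℝ) (E : ℝ) (δ : ℂ)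

/-- Unperturbed positive factors. -/
def MP : ℕ → Mat2 := fun k => stepMat v (E : ℂ) ((k : ℤ) + 1)

/-- Unperturbed negative factors. -/
def MN : ℕ → Mat2 := fun k => (stepMat v (E : ℂ) (-(k : ℤ)))⁻¹

lemma transferPos_eq_seqS (k : ℕ) :
    transferPos v ((E : ℂ) + δ) k = seqS (MP v E) Pmat δ k := by
  induction k with
  | zero => rfl
  | succ k ih =>
    show stepMat v ((E : ℂ) + δ) ((k : ℤ) + 1) * transferPos v ((E : ℂ) + δ) k = _
    rw [stepMat_perturb, ih]; rfl

lemma transferNeg_eq_seqS (k : ℕ) :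
    transferNeg v ((E : ℂ) + δ) k = seqS (MN v E) Qmat δ k := by
  induction k with
  | zero => rfl
  | succ k ih =>
    show (stepMat v ((E : ℂ) + δ) (-(k : ℤ)))⁻¹ * transferNeg v ((E : ℂ) + δ) k = _
    rw [stepMat_inv_perturb, ih]; rfl

lemma transferPos_split {j k : ℕ} (h : j ≤ k) :
    transferPos v (E : ℂ) k = boxG (MP v E) j k * transferPos v (E : ℂ) j := by
  induction k, h using Nat.le_induction with
  | base => rw [boxG_self, one_mul]
  | succ k hk ih =>
    show stepMat v (E : ℂ) ((k : ℤ) + 1) * transferPos v (E : ℂ) k = _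
    rw [ih, boxG_succ_of_le _ hk, Matrix.mul_assoc]; rfl

lemma transferNeg_split {j k : ℕ} (h : j ≤ k) :
    transferNeg v (E : ℂ) k = boxG (MN v E) j k * transferNeg v (E : ℂ) j := by
  induction k, h using Nat.le_induction with
  | base => rw [boxG_self, one_mul]
  | succ k hk ih =>
    show (stepMat v (E : ℂ) (-(k : ℤ)))⁻¹ * transferNeg v (E : ℂ) k = _
    rw [ih, boxG_succ_of_le _ hk, Matrix.mul_assoc]; rfl

lemma transferZ_ofNat (z : ℂ) (k : ℕ) : transferZ v z (k : ℤ) = transferPos v z k := by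
  simp [transferZ]

lemma transferZ_negNat (z : ℂ) (k : ℕ) : transferZ v z (-(k : ℤ)) = transferNeg v z k := by
  cases k with
  | zero => rfl
  | succ k =>
    rw [transferZ, if_neg (by omega)]
    norm_num

lemma boxG_pos_eq_transferBox {j k : ℕ} (h : j ≤ k) :
    boxG (MP v E) j k = transferBox v (E : ℂ) ((j : ℤ) + 1) (k : ℤ) := by
  rw [transferBox]
  have h1 : ((j : ℤ) + 1 - 1) = (j : ℤ) := by ring
  rw [h1, transferZ_ofNat, transferZ_ofNat, transferPos_split v E h, Matrix.mul_assoc,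
    Matrix.mul_nonsing_inv _ (by rw [det_transferPos]; exact isUnit_one), Matrix.mul_one]

lemma boxG_neg_eq_transferBox {j k : ℕ} (h : j ≤ k) :
    boxG (MN v E) j k = transferBox v (E : ℂ) (1 - (j : ℤ)) (-(k : ℤ)) := by
  rw [transferBox]
  have h1 : (1 - (j : ℤ) - 1) = -(j : ℤ) := by ring
  rw [h1, transferZ_negNat, transferZ_negNat, transferNeg_split v E h, Matrix.mul_assoc,
    Matrix.mul_nonsing_inv _ (by rw [det_transferNeg]; exact isUnit_one), Matrix.mul_one]

/-! ### Facts about `Ksup` -/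

lemma Ksup_bddAbove (N : ℝ) :
    BddAbove {x : ℝ | ∃ m n : ℤ, (|m| : ℝ) ≤ N ∧ (|n| : ℝ) ≤ N ∧
      x = opNorm (transferBox v (E : ℂ) m n)} := by
  set c : ℤ := ⌈N⌉
  apply Set.Finite.bddAbove
  apply Set.Finite.subset (Set.Finite.image
    (fun p : ℤ × ℤ => opNorm (transferBox v (E : ℂ) p.1 p.2))
    (Set.Finite.prod (Set.finite_Icc (-c) c) (Set.finite_Icc (-c) c)))
  rintro x ⟨m, n, hm, hn, rfl⟩
  refine ⟨(m, n), ⟨?_, ?_⟩, rfl⟩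
  · rw [Set.mem_Icc, ← abs_le]
    exact_mod_cast le_trans hm (Int.le_ceil N)
  · rw [Set.mem_Icc, ← abs_le]
    exact_mod_cast le_trans hn (Int.le_ceil N)

lemma le_Ksup {N : ℝ} {m n : ℤ} (hm : (|m| : ℝ) ≤ N) (hn : (|n| : ℝ) ≤ N) :
    ‖transferBox v (E : ℂ) m n‖ ≤ Ksup v E N :=
  le_csSup (Ksup_bddAbove v E N) ⟨m, n, hm, hn, rfl⟩

lemma one_le_norm_stepMat : 1 ≤ ‖stepMat v (E : ℂ) 0‖ := by
  set A := stepMat v (E : ℂ) 0 with hA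
  have key := Matrix.l2_opNorm_mulVec A ((WithLp.equiv 2 (Fin 2 → ℂ)).symm ![0, 1])
  have h1 : A *ᵥ ((WithLp.equiv 2 (Fin 2 → ℂ)).symm ![0, 1]) = ![-1, 0] := by
    ext i
    fin_cases i <;> simp [hA, stepMat, Matrix.mulVec, dotProduct, Fin.sum_univ_two]
  rw [h1] at key
  have h2 : ‖(EuclideanSpace.equiv (Fin 2) ℂ).symm ![(-1 : ℂ), 0]‖ = 1 := by
    simp [EuclideanSpace.norm_eq, Fin.sum_univ_two]
  have h3 : ‖((WithLp.equiv 2 (Fin 2 → ℂ)).symm ![(0 : ℂ), 1])‖ = 1 := by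
    simp [EuclideanSpace.norm_eq, Fin.sum_univ_two]
  rw [h3] at key
  calc (1 : ℝ) = ‖(EuclideanSpace.equiv (Fin 2) ℂ).symm ![(-1 : ℂ), 0]‖ := h2.symm
    _ ≤ ‖A‖ * 1 := key
    _ = ‖A‖ := mul_one _

lemma transferBox_zero_zero : transferBox v (E : ℂ) 0 0 = stepMat v (E : ℂ) 0 := by
  rw [transferBox]
  have h0 : transferZ v (E : ℂ) 0 = 1 := rfl
  have h1 : transferZ v (E : ℂ) (0 - 1) = (stepMat v (E : ℂ) 0)⁻¹ := by
    show transferZ v (E : ℂ) (-1) = _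
    rw [show (-1 : ℤ) = -((1 : ℕ) : ℤ) by norm_num, transferZ_negNat]
    show (stepMat v (E : ℂ) (-(0 : ℤ)))⁻¹ * 1 = _
    rw [Matrix.mul_one]
    norm_num
  rw [h0, h1, Matrix.one_mul, Matrix.nonsing_inv_nonsing_inv _ (isUnit_det_stepMat v _ 0)]

lemma one_le_Ksup {N : ℝ} (hN : 0 < N) : 1 ≤ Ksup v E N := by
  have h := le_Ksup v E (N := N) (m := 0) (n := 0) (by simpa using hN.le) (by simpa using hN.le)
  rw [transferBox_zero_zero] at h
  exact le_trans (one_le_norm_stepMat v E) h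

end TransferAux

open TransferAux

/-- Lemma 2.1 of Damanik–Tcheremchantsev: perturbation of transfer
matrices in the energy: `‖T_{n,E+δ}‖ ≤ K(N) exp(K(N) |n| |δ|)` for `|n| ≤ N`. -/
theorem transfer_perturbation
    (v : ℤ → ℝ) (E : ℝ) (N : ℝ) (hN : 0 < N) (δ : ℂ) (n : ℤ) (hn : (|n| : ℝ) ≤ N) :
    opNorm (transferZ v ((E : ℂ) + δ) n)
      ≤ Ksup v E N * Real.exp (Ksup v E N * (|n| : ℝ) * ‖δ‖) := by
  set K : ℝ := Ksup v E N with hKdef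
  have hK1 : 1 ≤ K := one_le_Ksup v E hN
  have hK0 : 0 ≤ K := le_trans zero_le_one hK1
  set x : ℝ := K * ‖δ‖ with hxdef
  have hx0 : 0 ≤ x := mul_nonneg hK0 (norm_nonneg _)
  rw [opNorm_eq_norm]
  -- the final exponential comparison, given the power bound
  have final : ∀ nn : ℕ, ((nn : ℝ) = (|n| : ℝ)) →
      K * (1 + x) ^ nn ≤ K * Real.exp (K * (|n| : ℝ) * ‖δ‖) := by
    intro nn hnn
    have h1x : 1 + x ≤ Real.exp x := by
      have := Real.add_one_le_exp x; linarith
    have hpow : (1 + x) ^ nn ≤ Real.exp x ^ nn :=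
      pow_le_pow_left₀ (by linarith) h1x nn
    have hexp : Real.exp x ^ nn = Real.exp (K * (|n| : ℝ) * ‖δ‖) := by
      rw [← Real.exp_nat_mul, ← hnn]
      congr 1
      rw [hxdef]; ring
    rw [← hexp]
    exact mul_le_mul_of_nonneg_left hpow hK0
  rcases le_or_gt 0 n with hpos | hneg
  · -- positive case
    set nn : ℕ := n.toNat with hnn
    have hcast : ((nn : ℕ) : ℝ) = (|n| : ℝ) := by
      rw [abs_of_nonneg (by exact_mod_cast hpos : (0 : ℝ) ≤ (n : ℝ))]
      exact_mod_cast Int.toNat_of_nonneg hpos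
    have hTZ : transferZ v ((E : ℂ) + δ) n = transferPos v ((E : ℂ) + δ) nn := by
      rw [transferZ, if_pos hpos]
    rw [hTZ, transferPos_eq_seqS]
    have hnnN : (nn : ℝ) ≤ N := by rw [hcast]; exact hn
    have hbox : ∀ j k, j ≤ k → k ≤ nn → ‖boxG (MP v E) j k‖ ≤ K := by
      intro j k hjk hknn
      rcases eq_or_lt_of_le hjk with rfl | hlt
      · rw [boxG_self, norm_one]; exact hK1
      · rw [boxG_pos_eq_transferBox v E hjk]
        have hkN : ((k : ℕ) : ℝ) ≤ N := le_trans (Nat.cast_le.mpr hknn) hnnN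
        have hj1k : ((j : ℝ) + 1) ≤ (k : ℝ) := by exact_mod_cast Nat.succ_le_of_lt hlt
        apply le_Ksup v E
        · push_cast
          rw [abs_of_nonneg (by positivity)]
          linarith
        · push_cast
          rw [abs_of_nonneg (by positivity)]
          exact hkN
    have := seqS_norm_le (MP v E) Pmat δ K hK1 norm_Pmat_le nn hbox nn le_rfl
    exact le_trans this (final nn hcast)
  · -- negative case
    set nn : ℕ := (-n).toNat with hnn
    have hcast : ((nn : ℕ) : ℝ) = (|n| : ℝ) := by
      rw [abs_of_neg (by exact_mod_cast hneg : (n : ℝ) < 0)]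
      exact_mod_cast Int.toNat_of_nonneg (by omega : (0 : ℤ) ≤ -n)
    have hTZ : transferZ v ((E : ℂ) + δ) n = transferNeg v ((E : ℂ) + δ) nn := by
      rw [transferZ, if_neg (by omega)]
    rw [hTZ, transferNeg_eq_seqS]
    have hnnN : (nn : ℝ) ≤ N := by rw [hcast]; exact hn
    have hbox : ∀ j k, j ≤ k → k ≤ nn → ‖boxG (MN v E) j k‖ ≤ K := by
      intro j k hjk hknn
      rcases eq_or_lt_of_le hjk with rfl | hlt
      · rw [boxG_self, norm_one]; exact hK1
      · rw [boxG_neg_eq_transferBox v E hjk]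
        have hkN : ((k : ℕ) : ℝ) ≤ N := le_trans (Nat.cast_le.mpr hknn) hnnN
        have hjk' : (j : ℝ) ≤ (k : ℝ) := by exact_mod_cast hjk
        have hk1 : (1 : ℝ) ≤ (k : ℝ) := by exact_mod_cast Nat.one_le_iff_ne_zero.mpr (by omega)
        apply le_Ksup v E
        · push_cast
          rw [abs_le]
          constructor <;> linarith
        · push_cast
          rw [abs_neg, abs_of_nonneg (by positivity)]
          exact hkN
    have := seqS_norm_le (MN v E) Qmat δ K hK1 norm_Qmat_le nn hbox nn le_rfl
    exact le_trans this (final nn hcast)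

end
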